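/- arXiv:2102.08898 — 3 statements merged into one kernel-verified Lean document; each statement's English description precedes it below -/
import Mathlib

section
/- Let V_1, ..., V_{n+1} be exchangeable real-valued random variables. Then for any β ∈ (0,1), P(V_{n+1} ≤ Quantile(β; V_{1:n} ∪ {∞})) ≥ β, where Quantile(β; F) := inf{v : F(v) ≥ β} and the quantile is taken with respect to the empirical distribution of the n values V_1,...,V_n together with one additional point at +∞. -/
open MeasureTheory Set
open scoped ENNReal Classical

/-- Exchangeability: the joint law of the vector is invariant under permutations. -/
def Exchangeable {Ω : Type*} [MeasurableSpace Ω] {E : Type*} [MeasurableSpace E]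
    (μ : Measure Ω) {n : ℕ} (V : Fin n → Ω → E) : Prop :=
  ∀ σ : Equiv.Perm (Fin n),
    Measure.map (fun ω i => V (σ i) ω) μ = Measure.map (fun ω i => V i ω) μ

/-- `Quantile(β; v₁,…,vₙ ∪ {∞})`: the β-quantile of the empirical distribution putting mass
`1/(n+1)` on each of the `n` real points and on one additional point at `+∞`. -/
noncomputable def inflatedQuantile (n : ℕ) (β : ℝ) (v : Fin n → ℝ) : EReal :=
  sInf {t : EReal |
    β ≤ ((({i : Fin n | (v i : EReal) ≤ t}).ncard : ℝ) + (if t = ⊤ then 1 else 0)) / ((n : ℝ) + 1)}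

/-! For `k = ⌈β (n + 1)⌉₊`, the event `V_{n+1} ≤ Quantile(β; V_{1:n} ∪ {∞})` says exactly that
fewer than `k` of the `n + 1` values lie strictly below `V_{n+1}`. Deterministically, at least `k`
of the `n + 1` indices have this property, and by exchangeability each index has it with the same
probability `p`; hence `(n + 1) p ≥ k ≥ β (n + 1)`. -/

open Finset

section StrictRank

variable {ι α : Type*} [Fintype ι] [LinearOrder α]

def strictRank (x : ι → α) (j : ι) : ℕ := #{i | x i < x j}

theorem strictRank_comp_equiv (x : ι → α) (σ : ι ≃ ι) (j : ι) :
    strictRank (fun i => x (σ i)) j = strictRank x (σ j) :=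
  card_equiv σ (by simp)

theorem le_card_strictRank_lt (x : ι → α) {k : ℕ} (hk : k ≤ Fintype.card ι) :
    k ≤ #{j | strictRank x j < k} := by
  set T : Finset ι := {j | strictRank x j < k}
  obtain hT | ⟨j₀, hj₀, hmin⟩ := Tᶜ.eq_empty_or_nonempty.imp_right (Tᶜ.exists_min_image x)
  · rwa [compl_eq_empty_iff _ |>.mp hT, card_univ]
  · have hbelow : ({i | x i < x j₀} : Finset ι) ⊆ T := fun i hi => by
      by_contra hiT
      exact (mem_filter.mp hi).2.not_ge (hmin i (mem_compl.mpr hiT))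
    calc k ≤ strictRank x j₀ := by simpa [T] using hj₀
      _ ≤ #T := card_le_card hbelow

theorem strictRank_last {n : ℕ} (x : Fin (n + 1) → α) :
    strictRank x (Fin.last n) = #{i : Fin n | x i.castSucc < x (Fin.last n)} := by
  rw [strictRank, card_filter, card_filter, Fin.sum_univ_castSucc]
  simp

theorem measurableSet_strictRank_lt [TopologicalSpace α] [OrderClosedTopology α]
    [SecondCountableTopology α] [MeasurableSpace α] [OpensMeasurableSpace α] (j : ι) (k : ℕ) :
    MeasurableSet {x : ι → α | strictRank x j < k} := by
  have : Measurable fun x : ι → α => strictRank x j := by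
    simp only [strictRank, card_filter]
    exact Finset.measurable_sum _ fun i _ =>
      Measurable.ite (measurableSet_lt (measurable_pi_apply i) (measurable_pi_apply j))
        measurable_const measurable_const
  exact this measurableSet_Iio

end StrictRank

theorem coe_le_inflatedQuantile_iff {n : ℕ} {β : ℝ} (hβ : 0 < β) (v : Fin n → ℝ) (w : ℝ) :
    (w : EReal) ≤ inflatedQuantile n β v ↔ #{i | v i < w} < ⌈β * (n + 1)⌉₊ := by
  have hmem : ∀ t : EReal, t ≠ ⊤ →
      (β ≤ (({i | (v i : EReal) ≤ t}.ncard : ℝ) + if t = ⊤ then 1 else 0) / (n + 1) ↔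
        ⌈β * (n + 1)⌉₊ ≤ #{i | (v i : EReal) ≤ t}) := fun t ht => by
    rw [if_neg ht, add_zero, le_div_iff₀ (by positivity), Nat.ceil_le, Set.ncard_eq_toFinset_card',
      Set.toFinset_ofPred]
  rw [inflatedQuantile, le_sInf_iff]
  constructor
  · intro hle
    by_contra! hk
    have hne : ({i | v i < w} : Finset (Fin n)).Nonempty :=
      card_pos.mp ((Nat.ceil_pos.mpr (by positivity)).trans_le hk)
    obtain ⟨i₀, hi₀, hmax⟩ := exists_max_image _ v hne
    refine (mem_filter.mp hi₀).2.not_ge (EReal.coe_le_coe_iff.mp (hle _ ((hmem _ ?_).mpr ?_)))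
    · exact EReal.coe_ne_top _
    · exact hk.trans (card_le_card fun i hi => by simpa using hmax i hi)
  · intro hk t ht
    by_cases htop : t = ⊤
    · exact htop ▸ le_top
    by_contra! hlt
    refine ((hmem t htop).mp ht |>.trans (card_le_card fun i hi => ?_)).not_gt hk
    simpa using (mem_filter.mp hi).2.trans_lt hlt

section Probability

variable {Ω : Type*} [MeasurableSpace Ω] {μ : Measure Ω}

theorem natCast_le_sum_measure_of_le_card [IsProbabilityMeasure μ] {ι : Type*} [Fintype ι]
    {A : ι → Set Ω} (hA : ∀ j, MeasurableSet (A j)) {k : ℕ} (hk : ∀ ω, k ≤ #{j | ω ∈ A j}) :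
    (k : ℝ≥0∞) ≤ ∑ j, μ (A j) :=
  calc (k : ℝ≥0∞) = ∫⁻ _, (k : ℝ≥0∞) ∂μ := by simp
    _ ≤ ∫⁻ ω, ∑ j, (A j).indicator 1 ω ∂μ := lintegral_mono fun ω => by
      simp only [Set.indicator_apply, Pi.one_apply, sum_boole]
      exact_mod_cast hk ω
    _ = ∑ j, μ (A j) := by
      rw [lintegral_finsetSum _ fun j _ => measurable_one.indicator (hA j)]
      exact sum_congr rfl fun j _ => lintegral_indicator_one (hA j)

theorem Exchangeable.measure_preimage_comp_perm {E : Type*} [MeasurableSpace E] {m : ℕ}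
    {V : Fin m → Ω → E} (hexch : Exchangeable μ V) (hV : ∀ i, Measurable (V i))
    (σ : Equiv.Perm (Fin m)) {S : Set (Fin m → E)} (hS : MeasurableSet S) :
    μ ((fun ω i => V (σ i) ω) ⁻¹' S) = μ ((fun ω i => V i ω) ⁻¹' S) := by
  rw [← Measure.map_apply (measurable_pi_lambda _ fun i => hV (σ i)) hS,
    ← Measure.map_apply (measurable_pi_lambda _ hV) hS, hexch σ]

theorem Exchangeable.measure_strictRank_lt_eq {m : ℕ} {V : Fin m → Ω → ℝ}
    (hexch : Exchangeable μ V) (hV : ∀ i, Measurable (V i)) (j j' : Fin m) (k : ℕ) :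
    μ {ω | strictRank (V · ω) j < k} = μ {ω | strictRank (V · ω) j' < k} := by
  have h := hexch.measure_preimage_comp_perm hV (Equiv.swap j j') (measurableSet_strictRank_lt j' k)
  simp only [Set.preimage_ofPred_eq] at h
  rw [← h]
  congr! 3 with ω
  rw [strictRank_comp_equiv (V · ω), Equiv.swap_apply_right]

theorem Exchangeable.natCast_le_mul_measure_strictRank_lt [IsProbabilityMeasure μ] {m : ℕ}
    {V : Fin m → Ω → ℝ} (hexch : Exchangeable μ V) (hV : ∀ i, Measurable (V i)) (j : Fin m)
    {k : ℕ} (hk : k ≤ m) :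
    (k : ℝ≥0∞) ≤ m * μ {ω | strictRank (V · ω) j < k} := by
  have hmeas : ∀ j', MeasurableSet {ω | strictRank (V · ω) j' < k} := fun j' =>
    measurableSet_strictRank_lt j' k |>.preimage (measurable_pi_lambda _ hV)
  calc (k : ℝ≥0∞) ≤ ∑ j', μ {ω | strictRank (V · ω) j' < k} :=
        natCast_le_sum_measure_of_le_card hmeas fun ω => by
          simpa using le_card_strictRank_lt (V · ω) (by simpa using hk)
    _ = m * μ {ω | strictRank (V · ω) j < k} := by
      simp [hexch.measure_strictRank_lt_eq hV _ j]

end Probability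

/-- Inflated quantile lemma: for exchangeable real random variables `V₁,…,V_{n+1}` and
any `β ∈ (0,1)`, `P(V_{n+1} ≤ Quantile(β; V_{1:n} ∪ {∞})) ≥ β`. -/
theorem inflated_quantile_coverage {Ω : Type*} [MeasurableSpace Ω]
    (μ : Measure Ω) [IsProbabilityMeasure μ] (n : ℕ)
    (V : Fin (n + 1) → Ω → ℝ) (hmeas : ∀ i, Measurable (V i))
    (hexch : Exchangeable μ V) (β : ℝ) (hβ : β ∈ Set.Ioo (0:ℝ) 1) :
    ENNReal.ofReal β ≤
      μ {ω | (V (Fin.last n) ω : EReal) ≤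
        inflatedQuantile n β (fun i : Fin n => V i.castSucc ω)} := by
  obtain ⟨hβ₀, hβ₁⟩ := hβ
  set k := ⌈β * (n + 1)⌉₊
  have hk : k ≤ n + 1 := Nat.ceil_le.mpr (by push_cast; exact mul_le_of_le_one_left (by positivity) hβ₁.le)
  have hevent : {ω | (V (Fin.last n) ω : EReal) ≤
      inflatedQuantile n β (fun i : Fin n => V i.castSucc ω)} =
      {ω | strictRank (V · ω) (Fin.last n) < k} := by
    ext ω
    simp only [Set.mem_ofPred_eq, coe_le_inflatedQuantile_iff hβ₀, strictRank_last, k]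
  have hcover := hexch.natCast_le_mul_measure_strictRank_lt hmeas (Fin.last n) hk
  push_cast at hcover
  rw [hevent]
  calc ENNReal.ofReal β ≤ ENNReal.ofReal (k / (n + 1)) :=
        ENNReal.ofReal_le_ofReal ((le_div_iff₀ (by positivity)).mpr (Nat.le_ceil _))
    _ = k / (n + 1) := by rw [ENNReal.ofReal_div_of_pos (by positivity)]; norm_cast
    _ ≤ _ := ENNReal.div_le_of_le_mul' hcover
end

section
/- Let V_1, ..., V_{n+1} be exchangeable real-valued random variables. Then the event {V_{n+1} > Quantile(β; V_{1:n} ∪ {∞})} occurs if and only if {V_{n+1} > Quantile(β; V_{1:(n+1)})}, where quantiles are of the empirical distributions of the indicated multisets. -/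
open MeasureTheory Set
open scoped ENNReal Classical

/-- β-quantile of the empirical distribution of `n` real points (each with mass `1/n`). -/
noncomputable def empiricalQuantile (n : ℕ) (β : ℝ) (v : Fin n → ℝ) : EReal :=
  sInf {t : EReal | β ≤ (({i : Fin n | (v i : EReal) ≤ t}).ncard : ℝ) / (n : ℝ)}

/-! Whether `sInf S < x` holds depends only on `S ∩ Iio x`. Below the point
`x = v (last n)` the extra point at `+∞` and the point `x` itself are both not yet counted,
so the two empirical distribution functions agree there, and hence so do the two events. -/

theorem sInf_lt_iff_sInf_lt_of_forall_lt {α : Type*} [CompleteLinearOrder α] {S T : Set α}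
    {x : α} (h : ∀ t < x, t ∈ S ↔ t ∈ T) : sInf S < x ↔ sInf T < x := by
  simp only [sInf_lt_iff]
  exact exists_congr fun t => ⟨fun ⟨hS, ht⟩ => ⟨(h t ht).1 hS, ht⟩,
    fun ⟨hT, ht⟩ => ⟨(h t ht).2 hT, ht⟩⟩

theorem Fin.ncard_setOf_of_not_last {n : ℕ} {p : Fin (n + 1) → Prop} (hp : ¬ p (Fin.last n)) :
    {i | p i}.ncard = {i : Fin n | p i.castSucc}.ncard := by
  have himage : {i | p i} = Fin.castSucc '' {i : Fin n | p i.castSucc} := by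
    ext i
    rcases Fin.eq_castSucc_or_eq_last i with ⟨j, rfl⟩ | rfl
    · simp [Fin.castSucc_injective n |>.eq_iff]
    · simp [hp, Fin.castSucc_ne_last]
  rw [himage, ncard_image_of_injective _ (Fin.castSucc_injective n)]

theorem inflatedQuantile_mem_iff_empiricalQuantile_mem {n : ℕ} {β : ℝ} {v : Fin (n + 1) → ℝ}
    {t : EReal} (ht : t < v (Fin.last n)) :
    β ≤ ((({i : Fin n | (v i.castSucc : EReal) ≤ t}).ncard : ℝ) + (if t = ⊤ then 1 else 0))
        / ((n : ℝ) + 1) ↔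
      β ≤ (({i : Fin (n + 1) | (v i : EReal) ≤ t}).ncard : ℝ) / ((n + 1 : ℕ) : ℝ) := by
  have hne_top : t ≠ ⊤ := (ht.trans (EReal.coe_lt_top _)).ne
  rw [Fin.ncard_setOf_of_not_last ht.not_ge, if_neg hne_top, add_zero, Nat.cast_succ]

theorem inflated_quantile_event_iff_general {Ω : Type*} (n : ℕ)
    (V : Fin (n + 1) → Ω → ℝ) (β : ℝ) (ω : Ω) :
    inflatedQuantile n β (fun i : Fin n => V i.castSucc ω) < (V (Fin.last n) ω : EReal) ↔
      empiricalQuantile (n + 1) β (fun i => V i ω) < (V (Fin.last n) ω : EReal) :=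
  sInf_lt_iff_sInf_lt_of_forall_lt fun _ ht =>
    inflatedQuantile_mem_iff_empiricalQuantile_mem (v := fun i => V i ω) ht

/-- For exchangeable `V₁,…,V_{n+1}`, the event `{V_{n+1} > Quantile(β; V_{1:n} ∪ {∞})}`
occurs iff `{V_{n+1} > Quantile(β; V_{1:(n+1)})}` does. -/
theorem inflated_quantile_event_iff {Ω : Type*} [MeasurableSpace Ω]
    (μ : Measure Ω) [IsProbabilityMeasure μ] (n : ℕ)
    (V : Fin (n + 1) → Ω → ℝ) (hmeas : ∀ i, Measurable (V i))
    (hexch : Exchangeable μ V) (β : ℝ) (hβ : β ∈ Set.Ioo (0:ℝ) 1) (ω : Ω) :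
    inflatedQuantile n β (fun i : Fin n => V i.castSucc ω) < (V (Fin.last n) ω : EReal) ↔
      empiricalQuantile (n + 1) β (fun i => V i ω) < (V (Fin.last n) ω : EReal) :=
  inflated_quantile_event_iff_general n V β ω
end

section
/- Meta calibration: let (Q̂_i, F_i), i = 1,...,n+1, be exchangeable pairs where Q̂_i ∈ ℝ and F_i is a (random) cumulative distribution function, and let V̂_{n+1} be a random variable which, conditionally on (Q̂_{n+1}, F_{n+1}), has CDF F_{n+1}. Define Λ(β) := inf{ λ : (1/(n+1)) Σ_{i=1..n} F_i(Q̂_i + λ) ≥ β }. Then P(V̂_{n+1} ≤ Q̂_{n+1} + Λ(β)) ≥ β. -/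
/-!
Let `Lⱼ` be the correction computed from all pairs but the `j`-th. By exchangeability,
`E[F_{n+1}(Q̂_{n+1} + Λ(β))] = E[Fⱼ(Q̂ⱼ + Lⱼ)]` for every `j`, while deterministically
`∑ⱼ Fⱼ(Q̂ⱼ + Lⱼ) ≥ (n + 1) β`, because every `Lⱼ` dominates the correction computed from all `n + 1`
pairs, at which the full sum is already `≥ (n + 1) β` by right continuity. Hence
`E[F_{n+1}(Q̂_{n+1} + Λ(β))] ≥ β`, and this expectation is at most `P(V̂ ≤ Q̂_{n+1} + Λ(β))` since
`Λ(β)` is a function of the pairs, given which `V̂` has CDF `F_{n+1}`.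
-/

open MeasureTheory Set
open scoped ENNReal Classical

/-- The meta-calibration correction `Λ(β)` built from the `n` calibration pairs
`(Q̂ᵢ, Fᵢ)` (valued in `EReal` so that it is `⊤` when no finite correction suffices). -/
noncomputable def metaCorrection (n : ℕ) (β : ℝ) (Q : Fin n → ℝ) (F : Fin n → ℝ → ℝ) : EReal :=
  sInf {l : EReal | ∃ lr : ℝ, l = (lr : EReal) ∧
    β ≤ (∑ i : Fin n, F i (Q i + lr)) / ((n : ℝ) + 1)}

/-- Extension of `g : ℝ → ℝ` to `EReal` by right limits along the rationals: it agrees with `g`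
at points of right continuity, equals `1` at `⊤` and `⨅ q, g q` at `⊥`, and it only reads `g` at
countably many points, which makes it measurable in `g` for the product σ-algebra. -/
noncomputable def cdfExt (g : ℝ → ℝ) (x : EReal) : ℝ≥0∞ :=
  ⨅ q : ℚ, if x < ((q : ℝ) : EReal) then ENNReal.ofReal (g q) else 1

section cdfExt

variable {g : ℝ → ℝ}

lemma cdfExt_le_one (hg1 : ∀ t, g t ≤ 1) (x : EReal) : cdfExt g x ≤ 1 := by
  refine iInf_le_of_le 0 ?_
  split_ifs
  · exact ENNReal.ofReal_le_one.mpr (hg1 _)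
  · exact le_rfl

lemma cdfExt_le_of_lt {x : EReal} {q : ℚ} (h : x < ((q : ℝ) : EReal)) :
    cdfExt g x ≤ ENNReal.ofReal (g q) :=
  iInf_le_of_le q (by rw [if_pos h])

lemma cdfExt_le_ofReal_of_lt (hg : Monotone g) {x : EReal} {t : ℝ} (h : x < t) :
    cdfExt g x ≤ ENNReal.ofReal (g t) := by
  obtain ⟨q, hxq, hqt⟩ := EReal.lt_iff_exists_rat_btwn.mp h
  exact (cdfExt_le_of_lt hxq).trans
    (ENNReal.ofReal_le_ofReal (hg (EReal.coe_le_coe_iff.mp hqt.le)))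

lemma ofReal_le_cdfExt (hg : Monotone g) (hg1 : ∀ t, g t ≤ 1) {r : ℝ} {x : EReal}
    (h : (r : EReal) ≤ x) : ENNReal.ofReal (g r) ≤ cdfExt g x := by
  refine le_iInf fun q => ?_
  split_ifs with hq
  · exact ENNReal.ofReal_le_ofReal (hg (EReal.coe_le_coe_iff.mp (h.trans hq.le)))
  · exact ENNReal.ofReal_le_one.mpr (hg1 _)

lemma ofReal_iInf_le_cdfExt (hg0 : ∀ t, 0 ≤ g t) (hg1 : ∀ t, g t ≤ 1) (x : ℝ) (y : EReal) :
    ENNReal.ofReal (⨅ r : ℝ, g (x + r)) ≤ cdfExt g y := by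
  have hbdd : BddBelow (range fun r => g (x + r)) := ⟨0, by rintro _ ⟨r, rfl⟩; exact hg0 _⟩
  refine le_iInf fun q => ?_
  split_ifs
  · refine ENNReal.ofReal_le_ofReal ((ciInf_le hbdd (q - x)).trans_eq ?_)
    rw [add_sub_cancel]
  · exact ENNReal.ofReal_le_one.mpr ((ciInf_le hbdd 0).trans (hg1 _))

lemma cdfExt_mono (hg1 : ∀ t, g t ≤ 1) : Monotone (cdfExt g) := by
  intro x y hxy
  refine le_iInf fun q => ?_
  split_ifs with hq
  · exact cdfExt_le_of_lt (hxy.trans_lt hq)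
  · exact cdfExt_le_one hg1 x

@[simp]
lemma cdfExt_top : cdfExt g ⊤ = 1 := by
  simp [cdfExt]

lemma cdfExt_coe (hg : Monotone g) (hg1 : ∀ t, g t ≤ 1) {r : ℝ}
    (hrc : ContinuousWithinAt g (Ici r) r) : cdfExt g r = ENNReal.ofReal (g r) := by
  refine le_antisymm ?_ (ofReal_le_cdfExt hg hg1 le_rfl)
  have hlim : Filter.Tendsto (fun t => ENNReal.ofReal (g t)) (nhdsWithin r (Ioi r))
      (nhds (ENNReal.ofReal (g r))) :=
    (ENNReal.continuous_ofReal.continuousAt.comp_continuousWithinAt hrc).mono_left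
      (nhdsWithin_mono _ Ioi_subset_Ici_self)
  exact ge_of_tendsto hlim (eventually_nhdsWithin_of_forall fun t ht =>
    cdfExt_le_ofReal_of_lt hg (EReal.coe_lt_coe_iff.mpr ht))

end cdfExt

lemma Measurable.cdfExt {α : Type*} [MeasurableSpace α] {f : α → ℝ → ℝ} {x : α → EReal}
    (hf : Measurable f) (hx : Measurable x) : Measurable fun a => cdfExt (f a) (x a) :=
  .iInf fun _ => .ite (measurableSet_lt hx measurable_const)
    ((measurable_pi_apply _).comp hf).ennreal_ofReal measurable_const

lemma EReal.sInf_coe_setOf_eq_iInf_rat {P : ℝ → Prop} (hP : ∀ a b, a ≤ b → P a → P b) :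
    sInf {l : EReal | ∃ r : ℝ, l = r ∧ P r} = ⨅ q : ℚ, if P q then ((q : ℝ) : EReal) else ⊤ := by
  refine le_antisymm (le_iInf fun q => ?_) (le_sInf ?_)
  · split_ifs with hq
    · exact sInf_le ⟨q, rfl, hq⟩
    · exact le_top
  · rintro _ ⟨r, rfl, hr⟩
    refine le_of_forall_gt_imp_ge_of_dense fun c hc => ?_
    obtain ⟨q, hrq, hqc⟩ := EReal.lt_iff_exists_rat_btwn.mp hc
    refine (iInf_le _ q).trans ?_
    rw [if_pos (hP r q (EReal.coe_le_coe_iff.mp hrq.le) hr)]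
    exact hqc.le

lemma metaCorrection_eq_iInf_rat (n : ℕ) (β : ℝ) (x : Fin n → ℝ) {g : Fin n → ℝ → ℝ}
    (hmono : ∀ i, Monotone (g i)) :
    metaCorrection n β x g =
      ⨅ q : ℚ, if β ≤ (∑ i, g i (x i + q)) / ((n : ℝ) + 1) then ((q : ℝ) : EReal) else ⊤ :=
  EReal.sInf_coe_setOf_eq_iInf_rat fun _ _ hab h => h.trans <|
    div_le_div_of_nonneg_right (Finset.sum_le_sum fun i _ => hmono i (by linarith)) (by positivity)

lemma Fin.sum_castSucc_perm_le {n : ℕ} {h : Fin (n + 1) → ℝ} (h0 : ∀ i, 0 ≤ h i)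
    (σ : Equiv.Perm (Fin (n + 1))) : ∑ i : Fin n, h (σ i.castSucc) ≤ ∑ i, h i :=
  calc ∑ i : Fin n, h (σ i.castSucc)
      ≤ ∑ i : Fin n, h (σ i.castSucc) + h (σ (Fin.last n)) := le_add_of_nonneg_right (h0 _)
    _ = ∑ i, h i := by rw [← Fin.sum_univ_castSucc (fun i => h (σ i)), Equiv.sum_comp σ h]

section SumCdfExt

variable {ι : Type*} [Fintype ι] {g : ι → ℝ → ℝ}

lemma le_sum_iInf_of_forall_le_sum (hmono : ∀ j, Monotone (g j)) (h0 : ∀ j t, 0 ≤ g j t)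
    (x : ι → ℝ) {c : ℝ} (h : ∀ r, c ≤ ∑ j, g j (x j + r)) :
    c ≤ ∑ j, ⨅ r : ℝ, g j (x j + r) := by
  have hlim : Filter.Tendsto (fun r => ∑ j, g j (x j + r)) Filter.atBot
      (nhds (∑ j, ⨅ r : ℝ, g j (x j + r))) :=
    tendsto_finsetSum _ fun j _ => tendsto_atBot_ciInf ((hmono j).comp (monotone_id.const_add _))
      ⟨0, by rintro _ ⟨r, rfl⟩; exact h0 j _⟩
  exact ge_of_tendsto hlim (Filter.Eventually.of_forall h)

lemma le_sum_of_forall_lt_le_sum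
    (hrc : ∀ j t, ContinuousWithinAt (g j) (Ici t) t) (x : ι → ℝ) {c ℓ : ℝ}
    (h : ∀ r, ℓ < r → c ≤ ∑ j, g j (x j + r)) : c ≤ ∑ j, g j (x j + ℓ) := by
  have hcont : ContinuousWithinAt (fun r => ∑ j, g j (x j + r)) (Ici ℓ) ℓ :=
    tendsto_finsetSum _ fun j _ => (hrc j (x j + ℓ)).comp
      (continuous_const.add continuous_id).continuousWithinAt
      fun r (hr : ℓ ≤ r) => show x j + ℓ ≤ x j + r by linarith
  exact ge_of_tendsto (hcont.mono_left (nhdsWithin_mono _ Ioi_subset_Ici_self))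
    (eventually_nhdsWithin_of_forall h)

lemma ofReal_le_sum_cdfExt_add (hmono : ∀ j, Monotone (g j)) (h0 : ∀ j t, 0 ≤ g j t)
    (h1 : ∀ j t, g j t ≤ 1) (hrc : ∀ j t, ContinuousWithinAt (g j) (Ici t) t) (x : ι → ℝ)
    {c : ℝ} (hc : c ≤ Fintype.card ι) {ℓ : EReal}
    (h : ∀ r : ℝ, ℓ < r → c ≤ ∑ j, g j (x j + r)) :
    ENNReal.ofReal c ≤ ∑ j, cdfExt (g j) (x j + ℓ) := by
  induction ℓ using EReal.rec with
  | bot =>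
    calc ENNReal.ofReal c
        ≤ ENNReal.ofReal (∑ j, ⨅ r : ℝ, g j (x j + r)) := ENNReal.ofReal_le_ofReal <|
          le_sum_iInf_of_forall_le_sum hmono h0 x fun r => h r (EReal.bot_lt_coe r)
      _ = ∑ j, ENNReal.ofReal (⨅ r : ℝ, g j (x j + r)) :=
          ENNReal.ofReal_sum_of_nonneg fun j _ => Real.iInf_nonneg fun _ => h0 j _
      _ ≤ ∑ j, cdfExt (g j) (x j + ⊥) :=
          Finset.sum_le_sum fun j _ => ofReal_iInf_le_cdfExt (h0 j) (h1 j) _ _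
  | coe ℓ =>
    calc ENNReal.ofReal c
        ≤ ENNReal.ofReal (∑ j, g j (x j + ℓ)) := ENNReal.ofReal_le_ofReal <|
          le_sum_of_forall_lt_le_sum hrc x fun r hr => h r (EReal.coe_lt_coe_iff.mpr hr)
      _ = ∑ j, cdfExt (g j) (x j + ℓ) := by
          rw [ENNReal.ofReal_sum_of_nonneg fun j _ => h0 j _]
          refine Finset.sum_congr rfl fun j _ => ?_
          rw [← EReal.coe_add, cdfExt_coe (hmono j) (h1 j) (hrc j _)]
  | top =>
    simp only [EReal.coe_add_top, cdfExt_top, Finset.sum_const, Finset.card_univ, nsmul_one]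
    simpa using ENNReal.ofReal_le_ofReal hc

end SumCdfExt

theorem ofReal_mul_le_sum_cdfExt_add_metaCorrection (n : ℕ) {β : ℝ} (hβ1 : β ≤ 1)
    (x : Fin (n + 1) → ℝ) {g : Fin (n + 1) → ℝ → ℝ} (hmono : ∀ j, Monotone (g j))
    (h0 : ∀ j t, 0 ≤ g j t) (h1 : ∀ j t, g j t ≤ 1)
    (hrc : ∀ j t, ContinuousWithinAt (g j) (Ici t) t) :
    (n + 1) * ENNReal.ofReal β ≤ ∑ j, cdfExt (g j) (x j +
      metaCorrection n β (fun i => x (Equiv.swap j (Fin.last n) i.castSucc))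
        (fun i => g (Equiv.swap j (Fin.last n) i.castSucc))) := by
  set ℓ : EReal := sInf {l : EReal | ∃ r : ℝ, l = r ∧ (n + 1) * β ≤ ∑ i, g i (x i + r)}
  have hℓ_le : ∀ j, ℓ ≤ metaCorrection n β (fun i => x (Equiv.swap j (Fin.last n) i.castSucc))
      (fun i => g (Equiv.swap j (Fin.last n) i.castSucc)) := by
    refine fun j => sInf_le_sInf ?_
    rintro _ ⟨r, rfl, hr⟩
    refine ⟨r, rfl, ?_⟩
    rw [le_div_iff₀ (by positivity), mul_comm] at hr
    exact hr.trans (Fin.sum_castSucc_perm_le (h := fun i => g i (x i + r)) (fun i => h0 i _) _)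
  have h_gt : ∀ r : ℝ, ℓ < r → (n + 1) * β ≤ ∑ i, g i (x i + r) := by
    intro r hr
    obtain ⟨_, ⟨r', rfl, hr'⟩, hr'r⟩ := sInf_lt_iff.mp hr
    exact hr'.trans (Finset.sum_le_sum fun i _ =>
      hmono i (by linarith [EReal.coe_lt_coe_iff.mp hr'r]))
  calc (n + 1) * ENNReal.ofReal β
      = ENNReal.ofReal ((n + 1) * β) := by
        rw [ENNReal.ofReal_mul (by positivity)]
        exact_mod_cast (congrArg (· * ENNReal.ofReal β) (ENNReal.ofReal_natCast (n + 1))).symm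
    _ ≤ ∑ j, cdfExt (g j) (x j + ℓ) :=
        ofReal_le_sum_cdfExt_add hmono h0 h1 hrc x
          (by simpa using mul_le_of_le_one_right (by positivity) hβ1) h_gt
    _ ≤ _ := Finset.sum_le_sum fun j _ => cdfExt_mono (h1 j) (add_le_add_right (hℓ_le j) _)

section ConditionalCdf

variable {Ω : Type*} {m mΩ : MeasurableSpace Ω} {μ : Measure Ω} [IsFiniteMeasure μ]
  {V : Ω → ℝ} {G : Ω → ℝ → ℝ} {τ : Ω → EReal}

lemma setLIntegral_cdfExt_le_measure_inter
    (hG_meas : Measurable G) (hG : ∀ ω t, G ω t ∈ Icc (0 : ℝ) 1)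
    (hVG : ∀ (t : ℝ) (A : Set Ω), MeasurableSet[m] A →
      μ ({ω | V ω ≤ t} ∩ A) = ENNReal.ofReal (∫ ω in A, G ω t ∂μ))
    {q : ℚ} {A : Set Ω} (hA : MeasurableSet[m] A) (hτA : ∀ ω ∈ A, τ ω < ((q : ℝ) : EReal)) :
    ∫⁻ ω in A, cdfExt (G ω) (τ ω) ∂μ ≤ μ ({ω | V ω ≤ q} ∩ A) := by
  have hGq : Measurable fun ω => G ω q := (measurable_pi_apply _).comp hG_meas
  have hint : Integrable (fun ω => G ω q) (μ.restrict A) :=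
    .of_bound hGq.aestronglyMeasurable 1 (.of_forall fun ω => by
      rw [Real.norm_eq_abs, abs_le]
      exact ⟨by linarith [(hG ω q).1], (hG ω q).2⟩)
  calc ∫⁻ ω in A, cdfExt (G ω) (τ ω) ∂μ
      ≤ ∫⁻ ω in A, ENNReal.ofReal (G ω q) ∂μ :=
        setLIntegral_mono hGq.ennreal_ofReal fun ω hω => cdfExt_le_of_lt (hτA ω hω)
    _ = μ ({ω | V ω ≤ q} ∩ A) := by
        rw [← ofReal_integral_eq_lintegral_ofReal hint (.of_forall fun ω => (hG ω q).1),
          hVG _ A hA]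

/-- Induction on `s` from its least element `a`: on `{τ < a}` the constraint `V ≤ a` implies all
the others, and off it the new constraint is void. -/
lemma setLIntegral_cdfExt_le_measure_forall_mem (hm : m ≤ mΩ)
    (hG_meas : Measurable G) (hG : ∀ ω t, G ω t ∈ Icc (0 : ℝ) 1)
    (hVG : ∀ (t : ℝ) (A : Set Ω), MeasurableSet[m] A →
      μ ({ω | V ω ≤ t} ∩ A) = ENNReal.ofReal (∫ ω in A, G ω t ∂μ))
    (hτ : Measurable[m] τ) (s : Finset ℚ) {B : Set Ω} (hB : MeasurableSet[m] B) :
    ∫⁻ ω in B, cdfExt (G ω) (τ ω) ∂μ ≤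
      μ ({ω | ∀ q ∈ s, τ ω < ((q : ℝ) : EReal) → V ω ≤ q} ∩ B) := by
  induction s using Finset.induction_on_min generalizing B with
  | empty =>
    simpa [setLIntegral_one] using setLIntegral_mono (μ := μ) measurable_const
      fun ω _ => cdfExt_le_one (fun t => (hG ω t).2) (τ ω)
  | insert a s ha ih =>
    set C := {ω | τ ω < ((a : ℝ) : EReal)}
    have hC : MeasurableSet[m] C := hτ measurableSet_Iio
    set E := {ω | ∀ q ∈ insert a s, τ ω < ((q : ℝ) : EReal) → V ω ≤ q}
    have h_on : {ω | V ω ≤ a} ∩ (B ∩ C) ⊆ E ∩ B ∩ C := by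
      rintro ω ⟨hVa, hωB, hωC⟩
      refine ⟨⟨fun q hq _ => ?_, hωB⟩, hωC⟩
      rcases Finset.mem_insert.mp hq with rfl | hq
      · exact hVa
      · exact hVa.trans (by exact_mod_cast (ha q hq).le)
    have h_off : {ω | ∀ q ∈ s, τ ω < ((q : ℝ) : EReal) → V ω ≤ q} ∩ (B \ C) ⊆ (E ∩ B) \ C := by
      rintro ω ⟨hωs, hωB, hωC⟩
      refine ⟨⟨fun q hq hτq => ?_, hωB⟩, hωC⟩
      rcases Finset.mem_insert.mp hq with rfl | hq
      · exact absurd hτq hωC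
      · exact hωs q hq hτq
    calc ∫⁻ ω in B, cdfExt (G ω) (τ ω) ∂μ
        = ∫⁻ ω in B ∩ C, cdfExt (G ω) (τ ω) ∂μ + ∫⁻ ω in B \ C, cdfExt (G ω) (τ ω) ∂μ :=
          (lintegral_inter_add_sdiff _ B (hm _ hC)).symm
      _ ≤ μ ({ω | V ω ≤ a} ∩ (B ∩ C)) + μ ({ω | ∀ q ∈ s, τ ω < ((q : ℝ) : EReal) → V ω ≤ q} ∩
            (B \ C)) :=
          add_le_add (setLIntegral_cdfExt_le_measure_inter hG_meas hG hVG (hB.inter hC)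
            fun _ hω => hω.2) (ih (hB.diff hC))
      _ ≤ μ (E ∩ B ∩ C) + μ ((E ∩ B) \ C) := add_le_add (measure_mono h_on) (measure_mono h_off)
      _ = μ (E ∩ B) := measure_inter_add_sdiff _ (hm _ hC)

/-- `τ` is approached from above through finite sets of rational levels. -/
theorem lintegral_cdfExt_le_measure_le (hm : m ≤ mΩ) (hV : Measurable V)
    (hG_meas : Measurable G) (hG : ∀ ω t, G ω t ∈ Icc (0 : ℝ) 1)
    (hVG : ∀ (t : ℝ) (A : Set Ω), MeasurableSet[m] A →
      μ ({ω | V ω ≤ t} ∩ A) = ENNReal.ofReal (∫ ω in A, G ω t ∂μ))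
    (hτ : Measurable[m] τ) :
    ∫⁻ ω, cdfExt (G ω) (τ ω) ∂μ ≤ μ {ω | (V ω : EReal) ≤ τ ω} := by
  set E : Finset ℚ → Set Ω := fun s => {ω | ∀ q ∈ s, τ ω < ((q : ℝ) : EReal) → V ω ≤ q}
  have hE_anti : Antitone E := fun s t hst ω hω q hq => hω q (hst hq)
  have hE_meas : ∀ s, MeasurableSet (E s) := fun s =>
    measurableSet_setOfPred.mpr <| Measurable.forall fun q => Measurable.forall fun _ =>
      (measurableSet_setOfPred.mp (hm _ (hτ measurableSet_Iio))).imp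
        (measurableSet_setOfPred.mp (hV measurableSet_Iic))
  have hE_iInter : ⋂ s, E s = {ω | (V ω : EReal) ≤ τ ω} := by
    ext ω
    simp only [E, mem_iInter, mem_ofPred_eq]
    refine ⟨fun h => le_of_forall_gt_imp_ge_of_dense fun c hc => ?_,
      fun h s q _ hq => EReal.coe_le_coe_iff.mp (h.trans hq.le)⟩
    obtain ⟨q, hτq, hqc⟩ := EReal.lt_iff_exists_rat_btwn.mp hc
    exact (EReal.coe_le_coe_iff.mpr (h {q} q (Finset.mem_singleton_self q) hτq)).trans hqc.le
  calc ∫⁻ ω, cdfExt (G ω) (τ ω) ∂μ ≤ ⨅ s, μ (E s) := le_iInf fun s => by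
        simpa using setLIntegral_cdfExt_le_measure_forall_mem hm hG_meas hG hVG hτ s
          MeasurableSet.univ
    _ = μ {ω | (V ω : EReal) ≤ τ ω} := by
        rw [← hE_iInter, hE_anti.directed_ge.measure_iInter (fun s => (hE_meas s).nullMeasurableSet)
          ⟨∅, measure_ne_top μ _⟩]

end ConditionalCdf

lemma le_lintegral_of_le_sum_comp_perm {Ω ι κ E : Type*} [MeasurableSpace Ω] [MeasurableSpace E]
    {μ : Measure Ω} [IsProbabilityMeasure μ] [Fintype κ] [Nonempty κ] {X : Ω → ι → E}
    (hX : Measurable X) (σ : κ → Equiv.Perm ι)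
    (hexch : ∀ k, μ.map (fun ω i => X ω (σ k i)) = μ.map X) {Φ : (ι → E) → ℝ≥0∞}
    (hΦ : Measurable Φ) {a : ℝ≥0∞}
    (h : ∀ ω, Fintype.card κ * a ≤ ∑ k, Φ (fun i => X ω (σ k i))) :
    a ≤ ∫⁻ ω, Φ (X ω) ∂μ := by
  have hσX : ∀ k, Measurable fun ω i => X ω (σ k i) := fun k =>
    (measurable_pi_lambda _ fun i => measurable_pi_apply (σ k i)).comp hX
  have hperm : ∀ k, ∫⁻ ω, Φ (fun i => X ω (σ k i)) ∂μ = ∫⁻ ω, Φ (X ω) ∂μ := fun k => by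
    rw [← lintegral_map hΦ (hσX k), hexch k, lintegral_map hΦ hX]
  refine (ENNReal.mul_le_mul_iff_right (a := Fintype.card κ) (by simp) (by simp)).mp ?_
  calc Fintype.card κ * a = ∫⁻ _, Fintype.card κ * a ∂μ := by simp
    _ ≤ ∫⁻ ω, ∑ k, Φ (fun i => X ω (σ k i)) ∂μ := lintegral_mono h
    _ = ∑ k, ∫⁻ ω, Φ (fun i => X ω (σ k i)) ∂μ :=
        lintegral_finsetSum _ fun k _ => hΦ.comp (hσX k)
    _ = Fintype.card κ * ∫⁻ ω, Φ (X ω) ∂μ := by simp [hperm]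

/-- `metaCorrection` of the first `n` of `n + 1` pairs `(xᵢ, gᵢ)`, rewritten through `cdfExt` so
that it reads only countably many values of the `gᵢ` and is measurable in the pairs. -/
noncomputable def pairCorrection (n : ℕ) (β : ℝ) (p : Fin (n + 1) → ℝ × (ℝ → ℝ)) : EReal :=
  ⨅ q : ℚ, if β ≤ (∑ i : Fin n, (cdfExt (p i.castSucc).2 ((p i.castSucc).1 + q : ℝ)).toReal) /
    ((n : ℝ) + 1) then ((q : ℝ) : EReal) else ⊤

lemma measurable_pairCorrection (n : ℕ) (β : ℝ) : Measurable (pairCorrection n β) :=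
  .iInf fun _ => .ite (measurableSet_le measurable_const <| Measurable.div_const
    (Finset.measurable_sum _ fun _ _ =>
      ((measurable_snd.comp (measurable_pi_apply _)).cdfExt
        ((measurable_fst.comp (measurable_pi_apply _)).add_const _).coe_real_ereal).ennreal_toReal)
    _) measurable_const measurable_const

lemma pairCorrection_eq_metaCorrection {n : ℕ} (β : ℝ) {p : Fin (n + 1) → ℝ × (ℝ → ℝ)}
    (hmono : ∀ i, Monotone (p i).2) (h01 : ∀ i t, (p i).2 t ∈ Icc (0 : ℝ) 1)
    (hrc : ∀ i t, ContinuousWithinAt (p i).2 (Ici t) t) :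
    pairCorrection n β p =
      metaCorrection n β (fun i => (p i.castSucc).1) (fun i => (p i.castSucc).2) := by
  rw [metaCorrection_eq_iInf_rat _ _ _ fun i => hmono _]
  simp only [pairCorrection, cdfExt_coe (hmono _) (fun t => (h01 _ t).2) (hrc _ _),
    ENNReal.toReal_ofReal (h01 _ _).1]

/-- Meta calibration: if the pairs `(Q̂ᵢ, Fᵢ)`, `i = 1,…,n+1`, are exchangeable (each `Fᵢ` a
random CDF), and `V̂` has conditional CDF `F_{n+1}` given the pairs, then
`P(V̂ ≤ Q̂_{n+1} + Λ(β)) ≥ β`, where `Λ(β)` is computed from the first `n` pairs. -/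
theorem meta_calibration {Ω : Type*} [MeasurableSpace Ω]
    (μ : Measure Ω) [IsProbabilityMeasure μ] (n : ℕ)
    (Q : Fin (n + 1) → Ω → ℝ) (F : Fin (n + 1) → Ω → ℝ → ℝ)
    (hQmeas : ∀ i, Measurable (Q i))
    (hFmeas : ∀ i, Measurable fun ω => F i ω)
    (hFmono : ∀ i ω, Monotone (F i ω))
    (hF01 : ∀ i ω t, F i ω t ∈ Set.Icc (0:ℝ) 1)
    (hFrc : ∀ i ω x, ContinuousWithinAt (F i ω) (Set.Ici x) x)
    -- exchangeability of the pairs (Q̂ᵢ, Fᵢ)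
    (hexch : ∀ σ : Equiv.Perm (Fin (n + 1)),
      Measure.map (fun ω => fun i => (Q (σ i) ω, F (σ i) ω)) μ =
        Measure.map (fun ω => fun i => (Q i ω, F i ω)) μ)
    (V : Ω → ℝ) (hVmeas : Measurable V)
    -- conditionally on the pairs, V̂ has CDF F_{n+1}
    (hVcdf : ∀ (t : ℝ) (A : Set Ω),
      MeasurableSet[MeasurableSpace.comap
        (fun ω => fun i : Fin (n + 1) => (Q i ω, F i ω)) inferInstance] A →
      μ ({ω | V ω ≤ t} ∩ A) = ENNReal.ofReal (∫ ω in A, F (Fin.last n) ω t ∂μ))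
    (β : ℝ) (hβ : β ∈ Set.Ioo (0:ℝ) 1) :
    ENNReal.ofReal β ≤
      μ {ω | (V ω : EReal) ≤ (Q (Fin.last n) ω : EReal) +
        metaCorrection n β (fun i => Q i.castSucc ω) (fun i => F i.castSucc ω)} := by
  set T : Ω → Fin (n + 1) → ℝ × (ℝ → ℝ) := fun ω i => (Q i ω, F i ω)
  have hT : Measurable T := measurable_pi_lambda _ fun i => (hQmeas i).prodMk (hFmeas i)
  have hcorr : ∀ ω (σ : Equiv.Perm (Fin (n + 1))), pairCorrection n β (fun i => T ω (σ i)) =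
      metaCorrection n β (fun i => Q (σ i.castSucc) ω) (fun i => F (σ i.castSucc) ω) :=
    fun ω σ => pairCorrection_eq_metaCorrection β (fun i => hFmono _ ω) (fun i => hF01 _ ω)
      (fun i => hFrc _ ω)
  set level : (Fin (n + 1) → ℝ × (ℝ → ℝ)) → EReal :=
    fun p => ((p (Fin.last n)).1 : EReal) + pairCorrection n β p
  have hlevel : Measurable level := (measurable_fst.comp (measurable_pi_apply _)).coe_real_ereal.add
    (measurable_pairCorrection n β)
  have h_exch : ENNReal.ofReal β ≤ ∫⁻ ω, cdfExt (T ω (Fin.last n)).2 (level (T ω)) ∂μ := by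
    refine le_lintegral_of_le_sum_comp_perm hT (fun j => Equiv.swap j (Fin.last n))
      (fun _ => hexch _) ((measurable_snd.comp (measurable_pi_apply _)).cdfExt hlevel) fun ω => ?_
    have := ofReal_mul_le_sum_cdfExt_add_metaCorrection n hβ.2.le (fun i => Q i ω)
      (fun j => hFmono j ω) (fun j t => (hF01 j ω t).1) (fun j t => (hF01 j ω t).2) (hFrc · ω)
    simpa [level, hcorr, T] using this
  have h_cond := lintegral_cdfExt_le_measure_le hT.comap_le hVmeas (hFmeas (Fin.last n))
    (fun ω => hF01 _ ω) hVcdf (hlevel.comp (comap_measurable T))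
  have hcorr_id : ∀ ω, metaCorrection n β (fun i => Q i.castSucc ω) (fun i => F i.castSucc ω) =
      pairCorrection n β (T ω) := fun ω => (hcorr ω 1).symm
  simp only [hcorr_id]
  exact h_exch.trans h_cond
end
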